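/- arXiv:1112.3427 — 2 statements merged into one kernel-verified Lean document; each statement's English description precedes it below -/
import Mathlib

section
/- For every fixed p with 0 < p < 1, the heavily trimmed lower mean converges in probability to the lower cluster mean: (1/⌈np⌉) ∑_{i=1}^{⌈np⌉} W_{(i)} →^P μ_l(p) as n → ∞. -/
open MeasureTheory ProbabilityTheory Filter Set

/-- The `i`-th order statistic (1-indexed) of the sample `W 0, …, W (n-1)`. -/
noncomputable def orderStat {Ω : Type*} (W : ℕ → Ω → ℝ) (n i : ℕ) (ω : Ω) : ℝ :=
  (List.insertionSort (· ≤ ·) (List.ofFn fun j : Fin n => W j ω)).getD (i - 1) 0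

open List

section Lists
variable {s : List ℝ} {t t₁ t₂ : ℝ}

lemma sorted_filter_eq_take (hs : s.Pairwise (· ≤ ·)) (t : ℝ) :
    s.filter (fun y => decide (y ≤ t)) = s.take (s.countP (fun y => decide (y ≤ t))) := by
  induction s with
  | nil => simp
  | cons a s ih =>
    rw [List.pairwise_cons] at hs
    obtain ⟨ha, hs'⟩ := hs
    by_cases h : a ≤ t
    · simp [List.filter_cons, List.countP_cons, h, ih hs']
    · have hc : s.countP (fun y => decide (y ≤ t)) = 0 :=
        List.countP_eq_zero.2 (fun x hx => by simp only [decide_eq_true_eq]; intro hxt; exact h ((ha x hx).trans hxt))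
      have hf : s.filter (fun y => decide (y ≤ t)) = [] :=
        List.filter_eq_nil_iff.2 (fun x hx => by simp only [decide_eq_true_eq]; intro hxt; exact h ((ha x hx).trans hxt))
      simp [List.filter_cons, List.countP_cons, h, hc, hf]
end Lists

section Lists2
variable {s : List ℝ} {t t₁ t₂ : ℝ}

lemma take_le_get (hs : s.Pairwise (· ≤ ·)) {k : ℕ} (hk : k < s.length) :
    ∀ x ∈ s.take (k+1), x ≤ s[k] := by
  intro x hx
  rw [List.mem_take_iff_getElem] at hx
  obtain ⟨i, hi, rfl⟩ := hx
  have hik : i ≤ k := by omega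
  rcases eq_or_lt_of_le hik with h | h
  · subst h; simp
  · exact List.pairwise_iff_getElem.mp hs i k (by omega) hk h

lemma drop_ge_get (hs : s.Pairwise (· ≤ ·)) {k : ℕ} (hk : k < s.length) :
    ∀ x ∈ s.drop k, s[k] ≤ x := by
  intro x hx
  rw [List.mem_drop_iff_getElem] at hx
  obtain ⟨i, hi, rfl⟩ := hx
  rcases Nat.eq_or_lt_of_le (Nat.le_add_right k i) with h | h
  · simp [← h]
  · exact List.pairwise_iff_getElem.mp hs k (k+i) hk (by omega) h

lemma countP_le_get_ge (hs : s.Pairwise (· ≤ ·)) {k : ℕ} (hk : k < s.length) :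
    k + 1 ≤ s.countP (fun y => decide (y ≤ s[k])) := by
  have h1 : (s.take (k+1)).countP (fun y => decide (y ≤ s[k])) = (s.take (k+1)).length :=
    List.countP_eq_length.2 (fun x hx => decide_eq_true (take_le_get hs hk x hx))
  have h2 := List.Sublist.countP_le (p := fun y => decide (y ≤ s[k])) (List.take_sublist (k+1) s)
  rw [h1] at h2
  rwa [List.length_take, min_eq_left (by omega)] at h2

lemma countP_lt_get_le (hs : s.Pairwise (· ≤ ·)) {k : ℕ} (hk : k < s.length) :
    s.countP (fun y => decide (y < s[k])) ≤ k := by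
  have hcp := List.countP_append (p := fun y => decide (y < s[k])) (l₁ := s.take k) (l₂ := s.drop k)
  rw [List.take_append_drop] at hcp
  rw [hcp]
  have h2 : (s.drop k).countP (fun y => decide (y < s[k])) = 0 :=
    List.countP_eq_zero.2 (fun x hx => by
      simp only [decide_eq_true_eq]; exact not_lt.2 (drop_ge_get hs hk x hx))
  have h1 : (s.take k).countP (fun y => decide (y < s[k])) ≤ k :=
    le_trans List.countP_le_length (by rw [List.length_take]; omega)
  omega
end Lists2

section Sandwich
variable {s : List ℝ}

lemma take_sum_sandwich (hs : s.Pairwise (· ≤ ·)) {m : ℕ} (hm : m ≤ s.length) (t₁ t₂ : ℝ)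
    (h₁ : s.countP (fun y => decide (y ≤ t₁)) ≤ m) (h₂ : m ≤ s.countP (fun y => decide (y ≤ t₂))) :
    (s.filter (fun y => decide (y ≤ t₁))).sum
        + ((m : ℝ) - (s.countP (fun y => decide (y ≤ t₁)) : ℝ)) * t₁ ≤ (s.take m).sum ∧
    (s.take m).sum ≤ (s.filter (fun y => decide (y ≤ t₁))).sum
        + ((m : ℝ) - (s.countP (fun y => decide (y ≤ t₁)) : ℝ)) * t₂ := by
  set c₁ := s.countP (fun y => decide (y ≤ t₁)) with hc₁
  set c₂ := s.countP (fun y => decide (y ≤ t₂)) with hc₂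
  -- decomposition of take m
  have hdec : s.take m = s.take c₁ ++ (s.drop c₁).take (m - c₁) := by
    have h1 : (s.take m).take c₁ = s.take c₁ := by
      rw [List.take_take, min_eq_left h₁]
    have := List.take_append_drop c₁ (s.take m)
    rw [h1, List.drop_take] at this
    exact this.symm
  have hfil : s.filter (fun y => decide (y ≤ t₁)) = s.take c₁ := sorted_filter_eq_take hs t₁
  set mid := (s.drop c₁).take (m - c₁) with hmid
  -- length of mid
  have hlen : mid.length = m - c₁ := by
    rw [hmid, List.length_take, List.length_drop]
    omega
  -- mid elements are > t₁
  have hdropzero : (s.drop c₁).countP (fun y => decide (y ≤ t₁)) = 0 := by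
    have hcp := List.countP_append (p := fun y => decide (y ≤ t₁)) (l₁ := s.take c₁) (l₂ := s.drop c₁)
    rw [List.take_append_drop] at hcp
    have htakec : (s.take c₁).countP (fun y => decide (y ≤ t₁)) = c₁ := by
      rw [← hfil, List.countP_filter]
      simp only [Bool.and_self]
      rfl
    omega
  have hmidlb : ∀ x ∈ mid, t₁ ≤ x := by
    intro x hx
    have hxd : x ∈ s.drop c₁ := List.mem_of_mem_take hx
    have := List.countP_eq_zero.1 hdropzero x hxd
    simp only [decide_eq_true_eq] at this
    linarith [not_le.1 this]
  -- mid elements are ≤ t₂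
  have hmidub : ∀ x ∈ mid, x ≤ t₂ := by
    intro x hx
    have hxm : x ∈ s.take m := by rw [hdec]; exact List.mem_append_right _ hx
    have hxc₂ : x ∈ s.take c₂ := by
      have : s.take m = (s.take c₂).take m := by rw [List.take_take, min_eq_left h₂]
      rw [this] at hxm
      exact List.mem_of_mem_take hxm
    rw [← sorted_filter_eq_take hs t₂] at hxc₂
    simpa using List.of_mem_filter hxc₂
  have hsum : (s.take m).sum = (s.filter (fun y => decide (y ≤ t₁))).sum + mid.sum := by
    rw [hdec, List.sum_append, hfil]
  have hcast : ((m - c₁ : ℕ) : ℝ) = (m : ℝ) - (c₁ : ℝ) := by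
    rw [Nat.cast_sub h₁]
  constructor
  · have := List.card_nsmul_le_sum mid t₁ hmidlb
    rw [hlen, nsmul_eq_mul, hcast] at this
    linarith [hsum]
  · have := List.sum_le_card_nsmul mid t₂ hmidub
    rw [hlen, nsmul_eq_mul, hcast] at this
    linarith [hsum]

end Sandwich

section Conversions

lemma list_sum_filter_eq_sum_map (p : ℝ → Bool) (l : List ℝ) :
    (l.filter p).sum = (l.map (fun y => if p y then y else 0)).sum := by
  induction l with
  | nil => simp
  | cons a l ih =>
    by_cases h : p a <;> simp [List.filter_cons, h, ih]

lemma list_countP_eq_sum_map (p : ℝ → Bool) (l : List ℝ) :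
    ((l.countP p : ℕ) : ℝ) = (l.map (fun y => if p y then (1:ℝ) else 0)).sum := by
  induction l with
  | nil => simp
  | cons a l ih =>
    by_cases h : p a <;> simp [List.countP_cons, h, ← ih] <;> push_cast <;> ring

lemma ofFn_map_sum {n : ℕ} (y : ℕ → ℝ) (g : ℝ → ℝ) :
    ((List.ofFn (fun j : Fin n => y j)).map g).sum = ∑ j ∈ Finset.range n, g (y j) := by
  rw [List.map_ofFn, List.sum_ofFn]
  exact Fin.sum_univ_eq_sum_range (fun j => g (y j)) n

lemma countP_ofFn_eq_card {n : ℕ} (x : Fin n → ℝ) (p : ℝ → Bool) :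
    (List.ofFn x).countP p = (Finset.univ.filter (fun j => p (x j))).card := by
  induction n with
  | zero => simp
  | succ n ih =>
    rw [List.ofFn_succ, List.countP_cons, ih (fun i => x i.succ)]
    rw [Finset.card_filter, Finset.card_filter, Fin.sum_univ_succ]
    by_cases h : p (x 0) <;> simp [h, add_comm]

lemma take_sum_eq_range_sum (s : List ℝ) {m : ℕ} (hm : m ≤ s.length) :
    (s.take m).sum = ∑ i ∈ Finset.range m, s.getD i 0 := by
  induction m with
  | zero => simp
  | succ m ih =>
    rw [List.take_succ, List.sum_append, ih (by omega), Finset.sum_range_succ]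
    have h : m < s.length := by omega
    rw [List.getElem?_eq_getElem h, List.getD_eq_getElem s 0 h]
    simp

lemma Icc_sum_eq_range_sum (f : ℕ → ℝ) (m : ℕ) :
    ∑ i ∈ Finset.Icc 1 m, f (i - 1) = ∑ i ∈ Finset.range m, f i := by
  apply Finset.sum_nbij' (fun i => i - 1) (fun i => i + 1)
  · intro a ha; simp only [Finset.mem_Icc] at ha; simp only [Finset.mem_range]; omega
  · intro a ha; simp only [Finset.mem_range] at ha; simp only [Finset.mem_Icc]; omega
  · intro a ha; simp only [Finset.mem_Icc] at ha; omega
  · intro a ha; omega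
  · intro a ha; rfl

end Conversions

section MinMax
open Finset

lemma measurable_finset_inf' {Ω ι : Type*} [MeasurableSpace Ω] {t : Finset ι} (ht : t.Nonempty)
    (g : ι → Ω → ℝ) (hg : ∀ i, Measurable (g i)) :
    Measurable (fun ω => t.inf' ht (fun i => g i ω)) := by
  induction ht using Finset.Nonempty.cons_induction with
  | singleton i => simpa using hg i
  | cons i t hit hne ih =>
    have : (fun ω => (Finset.cons i t hit).inf' (Finset.cons_nonempty hit) (fun j => g j ω))
        = fun ω => min (g i ω) (t.inf' hne (fun j => g j ω)) := by
      funext ω; rw [Finset.inf'_cons]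
    rw [this]
    exact (hg i).min ih

lemma measurable_finset_sup' {Ω ι : Type*} [MeasurableSpace Ω] {t : Finset ι} (ht : t.Nonempty)
    (g : ι → Ω → ℝ) (hg : ∀ i, Measurable (g i)) :
    Measurable (fun ω => t.sup' ht (fun i => g i ω)) := by
  induction ht using Finset.Nonempty.cons_induction with
  | singleton i => simpa using hg i
  | cons i t hit hne ih =>
    have : (fun ω => (Finset.cons i t hit).sup' (Finset.cons_nonempty hit) (fun j => g j ω))
        = fun ω => max (g i ω) (t.sup' hne (fun j => g j ω)) := by
      funext ω; rw [Finset.sup'_cons]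
    rw [this]
    exact (hg i).max ih

noncomputable def kthSmallest {n : ℕ} (k : ℕ) (hk : k < n) (x : Fin n → ℝ) : ℝ :=
  ((Finset.univ.powersetCard (k+1) : Finset (Finset (Fin n))).attach).inf'
    (Finset.attach_nonempty_iff.2 (Finset.powersetCard_nonempty.2 (by simpa using hk)))
    (fun S => S.1.sup'
      (Finset.card_pos.1 (by rw [(Finset.mem_powersetCard.1 S.2).2]; omega)) x)

lemma measurable_kthSmallest {Ω : Type*} [MeasurableSpace Ω] {n : ℕ} (k : ℕ) (hk : k < n)
    (W : Fin n → Ω → ℝ) (hW : ∀ j, Measurable (W j)) :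
    Measurable (fun ω => kthSmallest k hk (fun j => W j ω)) := by
  unfold kthSmallest
  exact measurable_finset_inf' _ _ (fun S => measurable_finset_sup' _ _ hW)

end MinMax

section OrderStatEq

lemma sorted_getD_eq_kthSmallest {n : ℕ} (x : Fin n → ℝ) (k : ℕ) (hk : k < n) :
    (List.insertionSort (· ≤ ·) (List.ofFn x)).getD k 0 = kthSmallest k hk x := by
  set s := List.insertionSort (· ≤ ·) (List.ofFn x) with hsdef
  have hperm : s ~ List.ofFn x := List.perm_insertionSort _ _
  have hsort : s.Pairwise (· ≤ ·) := List.pairwise_insertionSort _ _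
  have hlen : s.length = n := by rw [hperm.length_eq, List.length_ofFn]
  have hks : k < s.length := by omega
  rw [List.getD_eq_getElem s 0 hks]
  set v := s[k] with hv
  apply _root_.le_antisymm
  · -- v ≤ inf' : for every S of card k+1, v ≤ sup' S x
    apply Finset.le_inf'
    rintro ⟨S, hS⟩ -
    obtain ⟨hSu, hcard⟩ := Finset.mem_powersetCard.1 hS
    have hSne : S.Nonempty := Finset.card_pos.1 (by omega)
    by_contra hlt
    push_neg at hlt
    have hall : ∀ j ∈ S, x j < v := fun j hj => lt_of_le_of_lt (Finset.le_sup' x hj) hlt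
    have hcnt : (List.ofFn x).countP (fun y => decide (y < v)) ≥ k + 1 := by
      rw [countP_ofFn_eq_card]
      calc k + 1 = S.card := hcard.symm
        _ ≤ (Finset.univ.filter (fun j => decide (x j < v) = true)).card := by
            apply Finset.card_le_card
            intro j hj
            simp only [Finset.mem_filter, Finset.mem_univ, true_and, decide_eq_true_eq]
            exact hall j hj
    have hcnt2 := countP_lt_get_le hsort hks
    rw [hperm.countP_eq] at hcnt2
    rw [← hv] at hcnt2
    omega
  · -- inf' ≤ v : exhibit a subset S of card k+1 with sup' ≤ v
    have hcount : k + 1 ≤ (Finset.univ.filter (fun j => decide (x j ≤ v) = true)).card := by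
      have hc := countP_ofFn_eq_card x (fun y => decide (y ≤ v))
      rw [← hc, ← hperm.countP_eq]
      have := countP_le_get_ge hsort hks
      rwa [← hv] at this
    obtain ⟨S, hSsub, hScard⟩ := Finset.exists_subset_card_eq hcount
    have hSmem : S ∈ Finset.univ.powersetCard (k+1) :=
      Finset.mem_powersetCard.2 ⟨Finset.subset_univ S, hScard⟩
    have hSne : S.Nonempty := Finset.card_pos.1 (by omega)
    refine le_trans (Finset.inf'_le _ (Finset.mem_attach _ ⟨S, hSmem⟩)) ?_
    apply Finset.sup'_le
    intro j hj
    have := hSsub hj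
    simp only [Finset.mem_filter, Finset.mem_univ, true_and, decide_eq_true_eq] at this
    exact this

end OrderStatEq

section CDF
open MeasureTheory Set
open scoped ENNReal

variable {F Q : ℝ → ℝ} {ν : Measure ℝ}

lemma meas_zero_of_all_eps (μ : Measure ℝ) [IsFiniteMeasure μ] {s : Set ℝ}
    (h : ∀ ε : ℝ, 0 < ε → ε < 1 → μ s ≤ ENNReal.ofReal ε) : μ s = 0 := by
  by_contra h0
  have hpos : 0 < (μ s).toReal := ENNReal.toReal_pos h0 (measure_ne_top μ s)
  set ε := min ((μ s).toReal / 2) (1/2) with hε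
  have hε0 : 0 < ε := lt_min (by linarith) (by norm_num)
  have hε1 : ε < 1 := lt_of_le_of_lt (min_le_right _ _) (by norm_num)
  have := h ε hε0 hε1
  have hlt : ENNReal.ofReal ε < μ s := by
    rw [ENNReal.ofReal_lt_iff_lt_toReal (le_of_lt hε0) (measure_ne_top μ s)]
    calc ε ≤ (μ s).toReal / 2 := min_le_left _ _
      _ < (μ s).toReal := by linarith
  exact absurd this (not_le.2 hlt)

variable (hcdf : ∀ x, F x = (ν (Iic x)).toReal)
variable (hQ : ∀ q ∈ Set.Ioo (0:ℝ) 1, F (Q q) = q ∧ ∀ y, F y = q → y = Q q)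

include hcdf

lemma F_mono [IsProbabilityMeasure ν] : Monotone F := by
  intro a b hab
  rw [hcdf a, hcdf b]
  exact ENNReal.toReal_mono (measure_ne_top ν _) (measure_mono (Iic_subset_Iic.2 hab))

lemma F_nonneg : ∀ x, 0 ≤ F x := fun x => by rw [hcdf x]; exact ENNReal.toReal_nonneg

lemma F_le_one [IsProbabilityMeasure ν] : ∀ x, F x ≤ 1 := fun x => by
  rw [hcdf x]
  have h1 : ν (Iic x) ≤ 1 := prob_le_one
  calc (ν (Iic x)).toReal ≤ (1 : ℝ≥0∞).toReal :=
        ENNReal.toReal_mono (by simp) h1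
    _ = 1 := by simp

lemma nu_Iic (x : ℝ) [IsProbabilityMeasure ν] : ν (Iic x) = ENNReal.ofReal (F x) := by
  rw [hcdf x, ENNReal.ofReal_toReal (measure_ne_top ν _)]

include hQ in
lemma F_le_set [IsProbabilityMeasure ν] {a : ℝ} (ha : a ∈ Set.Ioo (0:ℝ) 1) :
    {w : ℝ | F w ≤ a} = Iic (Q a) := by
  obtain ⟨hFQ, huniq⟩ := hQ a ha
  ext w
  simp only [mem_setOf_eq, mem_Iic]
  constructor
  · intro h
    by_contra hw
    push_neg at hw
    have h1 : a ≤ F w := hFQ ▸ F_mono hcdf (le_of_lt hw)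
    have h2 : F w = a := le_antisymm h h1
    exact absurd (huniq w h2) (ne_of_gt hw)
  · intro h
    calc F w ≤ F (Q a) := F_mono hcdf h
      _ = a := hFQ

include hQ in
lemma Q_le_iff [IsProbabilityMeasure ν] {q : ℝ} (hq : q ∈ Set.Ioo (0:ℝ) 1) (y : ℝ) :
    Q q ≤ y ↔ q ≤ F y := by
  obtain ⟨hFQ, huniq⟩ := hQ q hq
  constructor
  · intro h; calc q = F (Q q) := hFQ.symm
      _ ≤ F y := F_mono hcdf h
  · intro h
    by_contra hw
    push_neg at hw
    have h1 : F y ≤ q := hFQ ▸ F_mono hcdf (le_of_lt hw)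
    have h2 : F y = q := le_antisymm h1 h
    exact absurd (huniq y h2) (by intro he; rw [he] at hw; exact lt_irrefl _ hw)

include hQ in
lemma Q_mono [IsProbabilityMeasure ν] {q q' : ℝ} (hq : q ∈ Set.Ioo (0:ℝ) 1)
    (hq' : q' ∈ Set.Ioo (0:ℝ) 1) (h : q ≤ q') : Q q ≤ Q q' := by
  rw [Q_le_iff hcdf hQ hq (Q q')]
  rw [(hQ q' hq').1]
  exact h

end CDF

section CDF2
open MeasureTheory Set
open scoped ENNReal

variable {F Q : ℝ → ℝ} {ν : Measure ℝ} [IsProbabilityMeasure ν]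
variable (hcdf : ∀ x, F x = (ν (Iic x)).toReal)
variable (hQ : ∀ q ∈ Set.Ioo (0:ℝ) 1, F (Q q) = q ∧ ∀ y, F y = q → y = Q q)

include hcdf hQ

lemma F_le_zero_measure : ν {w | F w ≤ 0} = 0 := by
  apply meas_zero_of_all_eps
  intro ε hε0 hε1
  have hsub : {w | F w ≤ 0} ⊆ Iic (Q ε) := by
    rw [← F_le_set hcdf hQ ⟨hε0, hε1⟩]
    intro w hw
    exact le_trans hw (le_of_lt hε0)
  calc ν {w | F w ≤ 0} ≤ ν (Iic (Q ε)) := measure_mono hsub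
    _ = ENNReal.ofReal (F (Q ε)) := nu_Iic hcdf _
    _ = ENNReal.ofReal ε := by rw [(hQ ε ⟨hε0, hε1⟩).1]

lemma F_ge_one_measure : ν {w | 1 ≤ F w} = 0 := by
  apply meas_zero_of_all_eps
  intro ε hε0 hε1
  set δ := 1 - ε with hδ
  have hδ0 : 0 < δ := by simp [hδ]; linarith
  have hδ1 : δ < 1 := by simp [hδ]; linarith
  have hsub : {w | 1 ≤ F w} ⊆ (Iic (Q δ))ᶜ := by
    intro w hw
    simp only [mem_compl_iff, mem_Iic]
    intro hle
    have : F w ≤ F (Q δ) := F_mono hcdf hle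
    rw [(hQ δ ⟨hδ0, hδ1⟩).1] at this
    have : (1:ℝ) ≤ δ := le_trans hw this
    linarith
  calc ν {w | 1 ≤ F w} ≤ ν ((Iic (Q δ))ᶜ) := measure_mono hsub
    _ = 1 - ν (Iic (Q δ)) := by
        rw [measure_compl measurableSet_Iic (measure_ne_top ν _), measure_univ]
    _ = 1 - ENNReal.ofReal δ := by rw [nu_Iic hcdf, (hQ δ ⟨hδ0, hδ1⟩).1]
    _ ≤ ENNReal.ofReal ε := by
        rw [← ENNReal.ofReal_one, ← ENNReal.ofReal_sub _ (le_of_lt hδ0)]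
        simp [hδ]

lemma ae_F_Ioo : ∀ᵐ w ∂ν, F w ∈ Set.Ioo (0:ℝ) 1 ∧ Q (F w) = w := by
  have h1 : ∀ᵐ w ∂ν, ¬ (F w ≤ 0) := by
    rw [ae_iff]; push_neg
    simpa using F_le_zero_measure hcdf hQ
  have h2 : ∀ᵐ w ∂ν, ¬ (1 ≤ F w) := by
    rw [ae_iff]; push_neg
    simpa using F_ge_one_measure hcdf hQ
  filter_upwards [h1, h2] with w hw1 hw2
  have hmem : F w ∈ Set.Ioo (0:ℝ) 1 := ⟨lt_of_not_ge hw1, lt_of_not_ge hw2⟩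
  exact ⟨hmem, ((hQ (F w) hmem).2 w rfl).symm⟩

lemma map_F_eq : ν.map F = volume.restrict (Set.Ioc (0:ℝ) 1) := by
  have hFmeas : Measurable F := (F_mono (ν := ν) hcdf).measurable
  haveI : IsProbabilityMeasure (ν.map F) := Measure.isProbabilityMeasure_map hFmeas.aemeasurable
  apply MeasureTheory.Measure.ext_of_Iic
  intro a
  rw [Measure.map_apply hFmeas measurableSet_Iic,
      Measure.restrict_apply measurableSet_Iic]
  have hset : Iic a ∩ Set.Ioc (0:ℝ) 1 = Set.Ioc 0 (min a 1) := by
    ext q; simp only [Set.mem_inter_iff, mem_Iic, mem_Ioc, lt_min_iff, le_min_iff]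
    constructor
    · rintro ⟨h1, h2, h3⟩; exact ⟨h2, h1, h3⟩
    · rintro ⟨h1, h2, h3⟩; exact ⟨h2, h1, h3⟩
  rw [hset, Real.volume_Ioc]
  rcases lt_or_ge a 0 with ha | ha
  · have : F ⁻¹' Iic a = ∅ := by
      ext w; simp only [mem_preimage, mem_Iic, mem_empty_iff_false, iff_false]
      intro h; linarith [F_nonneg hcdf w]
    rw [this]
    simp only [measure_empty]
    rw [ENNReal.ofReal_eq_zero.2 (by rcases le_total a 1 with h|h; all_goals simp [min_eq_left, min_eq_right, h]; linarith)]
  rcases eq_or_lt_of_le ha with ha0 | hapos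
  · subst ha0
    have : F ⁻¹' Iic 0 = {w | F w ≤ 0} := rfl
    rw [this, F_le_zero_measure hcdf hQ]
    simp
  rcases lt_or_ge a 1 with ha1 | ha1
  · have : F ⁻¹' Iic a = Iic (Q a) := F_le_set hcdf hQ ⟨hapos, ha1⟩
    rw [this, nu_Iic hcdf, (hQ a ⟨hapos, ha1⟩).1, min_eq_left (le_of_lt ha1)]
    simp
  · have : F ⁻¹' Iic a = Set.univ := by
      ext w; simp only [mem_preimage, mem_Iic, mem_univ, iff_true]
      exact le_trans (F_le_one hcdf w) ha1
    rw [this, measure_univ, min_eq_right ha1]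
    simp

end CDF2

section CDF3
open MeasureTheory Set
open scoped ENNReal

variable {F Q : ℝ → ℝ} {ν : Measure ℝ} [IsProbabilityMeasure ν]
variable (hcdf : ∀ x, F x = (ν (Iic x)).toReal)
variable (hQ : ∀ q ∈ Set.Ioo (0:ℝ) 1, F (Q q) = q ∧ ∀ y, F y = q → y = Q q)

include hcdf hQ

lemma gtrunc_measurable {p' : ℝ} (hp' : p' ∈ Set.Ioo (0:ℝ) 1) :
    Measurable (fun q => if 0 < q ∧ q ≤ p' then Q q else 0) := by
  apply measurable_of_Iic
  intro y
  have hkey : (fun q => if 0 < q ∧ q ≤ p' then Q q else 0) ⁻¹' Iic y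
      = (Set.Ioc 0 p' ∩ Iic (F y)) ∪ ((Set.Ioc 0 p')ᶜ ∩ {q : ℝ | 0 ≤ y}) := by
    ext q
    simp only [mem_preimage, mem_Iic, mem_union, mem_inter_iff, mem_Ioc, mem_compl_iff,
      mem_setOf_eq]
    by_cases hc : 0 < q ∧ q ≤ p'
    · rw [if_pos hc]
      have hqIoo : q ∈ Set.Ioo (0:ℝ) 1 := ⟨hc.1, lt_of_le_of_lt hc.2 hp'.2⟩
      rw [Q_le_iff hcdf hQ hqIoo y]
      simp [hc]
    · rw [if_neg hc]
      simp [hc]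
  rw [hkey]
  apply MeasurableSet.union
  · exact (measurableSet_Ioc.inter measurableSet_Iic)
  · apply MeasurableSet.inter measurableSet_Ioc.compl
    by_cases hy : (0:ℝ) ≤ y
    · simp only [hy]; simp [Set.setOf_true]
    · simp only [hy]; simp [Set.setOf_false]

lemma trunc_integral_eq {p' : ℝ} (hp' : p' ∈ Set.Ioo (0:ℝ) 1)
    (hInt : Integrable (fun w => w) ν) :
    (∫ w, (if w ≤ Q p' then w else 0) ∂ν) = (∫ q in Set.Ioc (0:ℝ) p', Q q) ∧
      IntegrableOn Q (Set.Ioc (0:ℝ) p') volume := by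
  set g : ℝ → ℝ := fun q => if 0 < q ∧ q ≤ p' then Q q else 0 with hgdef
  have hFmeas : Measurable F := (F_mono (ν := ν) hcdf).measurable
  have hg : Measurable g := gtrunc_measurable hcdf hQ hp'
  have hgind : g = (Set.Ioc (0:ℝ) p').indicator Q := by
    funext q; simp [hgdef, Set.indicator_apply, Set.mem_Ioc]
  -- a.e. equality
  have h1 : (fun w => if w ≤ Q p' then w else 0) =ᵐ[ν] (fun w => g (F w)) := by
    filter_upwards [ae_F_Ioo hcdf hQ] with w hw
    obtain ⟨hmem, hQF⟩ := hw
    have hiff : w ≤ Q p' ↔ F w ≤ p' := by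
      have := Set.ext_iff.1 (F_le_set hcdf hQ hp') w
      simpa using this.symm
    simp only [hgdef]
    by_cases hc : F w ≤ p'
    · rw [if_pos (hiff.2 hc), if_pos ⟨hmem.1, hc⟩, hQF]
    · rw [if_neg (fun h => hc (hiff.1 h)), if_neg (fun h => hc h.2)]
  -- measurability of truncation
  have htm : Measurable (fun w : ℝ => if w ≤ Q p' then w else 0) :=
    Measurable.ite measurableSet_Iic measurable_id measurable_const
  have hint_trunc : Integrable (fun w => if w ≤ Q p' then w else 0) ν := by
    apply Integrable.mono hInt htm.aestronglyMeasurable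
    filter_upwards with w
    by_cases h : w ≤ Q p' <;> simp [h]
  have hint_gF : Integrable (fun w => g (F w)) ν := hint_trunc.congr h1
  have hint_g : Integrable g (ν.map F) :=
    (integrable_map_measure hg.aestronglyMeasurable hFmeas.aemeasurable).2 hint_gF
  have hsub : Set.Ioc (0:ℝ) p' ∩ Set.Ioc (0:ℝ) 1 = Set.Ioc (0:ℝ) p' :=
    Set.inter_eq_left.2 (Set.Ioc_subset_Ioc le_rfl (le_of_lt hp'.2))
  constructor
  · calc (∫ w, (if w ≤ Q p' then w else 0) ∂ν) = ∫ w, g (F w) ∂ν := integral_congr_ae h1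
      _ = ∫ q, g q ∂(ν.map F) := (integral_map hFmeas.aemeasurable hg.aestronglyMeasurable).symm
      _ = ∫ q, g q ∂(volume.restrict (Set.Ioc (0:ℝ) 1)) := by rw [map_F_eq hcdf hQ]
      _ = ∫ q in Set.Ioc (0:ℝ) p', Q q ∂(volume.restrict (Set.Ioc (0:ℝ) 1)) := by
          rw [hgind, integral_indicator measurableSet_Ioc]
      _ = ∫ q in Set.Ioc (0:ℝ) p', Q q := by
          rw [Measure.restrict_restrict measurableSet_Ioc, hsub]
  · have : Integrable g (volume.restrict (Set.Ioc (0:ℝ) 1)) := by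
      rwa [map_F_eq hcdf hQ] at hint_g
    rw [hgind] at this
    have := (integrable_indicator_iff measurableSet_Ioc).1 this
    rwa [IntegrableOn, Measure.restrict_restrict measurableSet_Ioc, hsub] at this

end CDF3

open MeasureTheory ProbabilityTheory Filter Set
open scoped Topology ENNReal



lemma orderStat_measurable {Ω : Type*} [MeasurableSpace Ω] (W : ℕ → Ω → ℝ)
    (hmeas : ∀ i, Measurable (W i)) (n i : ℕ) (h1 : 1 ≤ i) (h2 : i ≤ n) :
    Measurable (fun ω => orderStat W n i ω) := by
  have hlt : i - 1 < n := by omega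
  have : (fun ω => orderStat W n i ω)
      = fun ω => kthSmallest (i-1) hlt (fun j : Fin n => W j ω) :=
    funext fun ω => sorted_getD_eq_kthSmallest _ _ hlt
  rw [this]
  exact measurable_kthSmallest _ hlt _ (fun j => hmeas j)

set_option maxHeartbeats 2000000 in
/-- **Consistency of the heavily trimmed lower mean.**
Under (A1)–(A2), for every fixed `p ∈ (0,1)`,
`(1/⌈np⌉) ∑_{i=1}^{⌈np⌉} W_{(i)} →ᴾ μ_l(p) = (1/p)∫_0^p F⁻¹(q) dq`. -/
theorem trimmed_lower_mean_tendsto_in_probability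
    {Ω : Type*} [MeasurableSpace Ω] (P : Measure Ω) [IsProbabilityMeasure P]
    (W : ℕ → Ω → ℝ) (hmeas : ∀ i, Measurable (W i))
    (hindep : iIndepFun (m := fun _ => Real.measurableSpace) W P)
    (hident : ∀ i, IdentDistrib (W i) (W 0) P P)
    (F f Q : ℝ → ℝ)
    (hcdf : ∀ x, F x = (P (W 0 ⁻¹' Iic x)).toReal)
    (hdensity : P.map (W 0) = volume.withDensity (fun x => ENNReal.ofReal (f x)))
    (hQ : ∀ p ∈ Ioo (0 : ℝ) 1, F (Q p) = p ∧ ∀ y, F y = p → y = Q p)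
    (hL2 : MemLp (W 0) 2 P)
    (p : ℝ) (hp : p ∈ Ioo (0 : ℝ) 1) :
    TendstoInMeasure P
      (fun (n : ℕ) ω => (1 / (⌈(n : ℝ) * p⌉₊ : ℝ)) *
        ∑ i ∈ Finset.Icc 1 ⌈(n : ℝ) * p⌉₊, orderStat W n i ω)
      atTop
      (fun _ => (1 / p) * (∫ q in (0 : ℝ)..p, Q q)) := by
  classical
  obtain ⟨hp0, hp1⟩ := hp
  -- the law of W 0
  have hν : IsProbabilityMeasure (P.map (W 0)) := Measure.isProbabilityMeasure_map (hmeas 0).aemeasurable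
  have hcdf' : ∀ x, F x = ((P.map (W 0)) (Set.Iic x)).toReal := by
    intro x; rw [hcdf x, Measure.map_apply (hmeas 0) measurableSet_Iic]
  have hIntW : Integrable (W 0) P := hL2.integrable (by norm_num)
  have hIntν : Integrable (fun w => w) (P.map (W 0)) :=
    (integrable_map_measure aestronglyMeasurable_id (hmeas 0).aemeasurable).2 hIntW
  have hQm : ∀ q q', q ∈ Set.Ioo (0:ℝ) 1 → q' ∈ Set.Ioo (0:ℝ) 1 → q ≤ q' → Q q ≤ Q q' :=
    fun q q' hq hq' h => Q_mono hcdf' hQ hq hq' h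
  -- δ setup
  set d : ℝ := min p (1 - p) / 2 with hd
  have hd0 : 0 < d := by
    have h1 : 0 < min p (1 - p) := lt_min hp0 (by linarith)
    rw [hd]; linarith
  have hdp : d < p := by
    have : min p (1-p) ≤ p := min_le_left _ _
    rw [hd]; linarith
  have hdq : d < 1 - p := by
    have : min p (1-p) ≤ 1 - p := min_le_right _ _
    rw [hd]; linarith
  set δ : ℕ → ℝ := fun k => d / ((k:ℝ)+1) with hδdef
  have hδpos : ∀ k, 0 < δ k := fun k => by
    rw [hδdef]; positivity
  have hδle : ∀ k, δ k ≤ d := fun k => by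
    rw [hδdef]
    exact div_le_self hd0.le (by push_cast; linarith [Nat.cast_nonneg (α := ℝ) k])
  have hlo : ∀ k, p - δ k ∈ Set.Ioo (0:ℝ) 1 :=
    fun k => ⟨by linarith [hδle k], by linarith [hδpos k]⟩
  have hhi : ∀ k, p + δ k ∈ Set.Ioo (0:ℝ) 1 :=
    fun k => ⟨by linarith [hδpos k], by linarith [hδle k]⟩
  have hδ0 : Tendsto δ atTop (𝓝 0) := by
    have h1 : δ = fun k : ℕ => d * (1/((k:ℝ)+1)) := by
      funext k; rw [hδdef]; ring
    rw [h1]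
    have := tendsto_one_div_add_atTop_nhds_zero_nat (𝕜 := ℝ)
    simpa using this.const_mul d
  -- integral identities
  have htruncmeas : ∀ t : ℝ, Measurable (fun x : ℝ => if x ≤ t then x else 0) :=
    fun t => Measurable.ite measurableSet_Iic measurable_id measurable_const
  have hindmeas : ∀ t : ℝ, Measurable (fun x : ℝ => if x ≤ t then (1:ℝ) else 0) :=
    fun t => Measurable.ite measurableSet_Iic measurable_const measurable_const
  have hid : ∀ p' ∈ Set.Ioo (0:ℝ) 1,
      (∫ ω, (if W 0 ω ≤ Q p' then W 0 ω else 0) ∂P) = ∫ q in Set.Ioc (0:ℝ) p', Q q := by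
    intro p' hp'
    have h1 : ∫ w, (if w ≤ Q p' then w else 0) ∂(P.map (W 0))
        = ∫ ω, (if W 0 ω ≤ Q p' then W 0 ω else 0) ∂P :=
      integral_map (hmeas 0).aemeasurable (htruncmeas (Q p')).aestronglyMeasurable
    rw [← h1, (trunc_integral_eq hcdf' hQ hp' hIntν).1]
  have hQint : ∀ p' ∈ Set.Ioo (0:ℝ) 1, IntegrableOn Q (Set.Ioc (0:ℝ) p') volume :=
    fun p' hp' => (trunc_integral_eq hcdf' hQ hp' hIntν).2
  have hFt : ∀ t : ℝ, (∫ ω, (if W 0 ω ≤ t then (1:ℝ) else 0) ∂P) = F t := by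
    intro t
    have h1 : (fun ω => if W 0 ω ≤ t then (1:ℝ) else 0)
        = Set.indicator (W 0 ⁻¹' Set.Iic t) (fun _ => (1:ℝ)) := by
      funext ω; simp [Set.indicator_apply, Set.mem_preimage, Set.mem_Iic]
    rw [h1, integral_indicator_const _ ((hmeas 0) measurableSet_Iic), hcdf t, smul_eq_mul, mul_one]
    rfl
  -- integrability of compositions
  have htruncint : ∀ t : ℝ, Integrable (fun ω => if W 0 ω ≤ t then W 0 ω else 0) P := by
    intro t
    apply Integrable.mono hIntW ((htruncmeas t).comp (hmeas 0)).aestronglyMeasurable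
    filter_upwards with ω
    by_cases h : W 0 ω ≤ t <;> simp [h]
  have hindint : ∀ t : ℝ, Integrable (fun ω => if W 0 ω ≤ t then (1:ℝ) else 0) P := by
    intro t
    apply Integrable.mono (integrable_const (1:ℝ)) ((hindmeas t).comp (hmeas 0)).aestronglyMeasurable
    filter_upwards with ω
    by_cases h : W 0 ω ≤ t <;> simp [h]
  -- strong law of large numbers, composed
  have hslln : ∀ (φ : ℝ → ℝ), Measurable φ → Integrable (fun ω => φ (W 0 ω)) P →
      ∀ᵐ ω ∂P, Tendsto (fun n : ℕ => (n:ℝ)⁻¹ * ∑ i ∈ Finset.range n, φ (W i ω)) atTop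
        (𝓝 (∫ ω, φ (W 0 ω) ∂P)) := by
    intro φ hφ hφi
    have h := strong_law_ae (fun i ω => φ (W i ω)) hφi
      (fun i j hij => (hindep.indepFun hij).comp hφ hφ)
      (fun i => (hident i).comp hφ)
    filter_upwards [h] with ω hω
    simpa [smul_eq_mul] using hω
  -- the three a.e. limit families
  have haeA : ∀ᵐ ω ∂P, ∀ k : ℕ, Tendsto
      (fun n : ℕ => (n:ℝ)⁻¹ * ∑ i ∈ Finset.range n, (if W i ω ≤ Q (p - δ k) then W i ω else 0))
      atTop (𝓝 (∫ q in Set.Ioc (0:ℝ) (p - δ k), Q q)) := by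
    rw [ae_all_iff]
    intro k
    have h := hslln _ (htruncmeas (Q (p - δ k))) (htruncint (Q (p - δ k)))
    rwa [hid (p - δ k) (hlo k)] at h
  have haeB : ∀ᵐ ω ∂P, ∀ k : ℕ, Tendsto
      (fun n : ℕ => (n:ℝ)⁻¹ * ∑ i ∈ Finset.range n, (if W i ω ≤ Q (p - δ k) then (1:ℝ) else 0))
      atTop (𝓝 (p - δ k)) := by
    rw [ae_all_iff]
    intro k
    have h := hslln _ (hindmeas (Q (p - δ k))) (hindint (Q (p - δ k)))
    rwa [hFt (Q (p - δ k)), (hQ (p - δ k) (hlo k)).1] at h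
  have haeC : ∀ᵐ ω ∂P, ∀ k : ℕ, Tendsto
      (fun n : ℕ => (n:ℝ)⁻¹ * ∑ i ∈ Finset.range n, (if W i ω ≤ Q (p + δ k) then (1:ℝ) else 0))
      atTop (𝓝 (p + δ k)) := by
    rw [ae_all_iff]
    intro k
    have h := hslln _ (hindmeas (Q (p + δ k))) (hindint (Q (p + δ k)))
    rwa [hFt (Q (p + δ k)), (hQ (p + δ k) (hhi k)).1] at h
  -- ceiling facts
  have hm_le_n : ∀ n : ℕ, ⌈(n:ℝ) * p⌉₊ ≤ n := fun n =>
    Nat.ceil_le.2 (mul_le_of_le_one_right (Nat.cast_nonneg n) hp1.le)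
  have hm_ge : ∀ n : ℕ, (n:ℝ) * p ≤ (⌈(n:ℝ) * p⌉₊ : ℝ) := fun n => Nat.le_ceil _
  have hm_lt : ∀ n : ℕ, (⌈(n:ℝ) * p⌉₊ : ℝ) < (n:ℝ) * p + 1 := fun n =>
    Nat.ceil_lt_add_one (by positivity)
  have hm_pos : ∀ n : ℕ, 1 ≤ n → 0 < ⌈(n:ℝ) * p⌉₊ := by
    intro n hn
    apply Nat.ceil_pos.2
    have h1 : (1:ℝ) ≤ n := by exact_mod_cast hn
    nlinarith
  have hmn : Tendsto (fun n : ℕ => (⌈(n:ℝ) * p⌉₊ : ℝ) / n) atTop (𝓝 p) := by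
    apply tendsto_of_tendsto_of_tendsto_of_le_of_le' (g := fun _ : ℕ => p)
      (h := fun n : ℕ => p + 1/(n:ℝ)) tendsto_const_nhds
    · simpa using (tendsto_const_nhds (x := p)).add tendsto_one_div_atTop_nhds_zero_nat
    · filter_upwards [eventually_ge_atTop 1] with n hn
      have hn0 : (0:ℝ) < n := by exact_mod_cast hn
      rw [le_div_iff₀ hn0]
      calc p * n = n * p := mul_comm _ _
        _ ≤ _ := hm_ge n
    · filter_upwards [eventually_ge_atTop 1] with n hn
      have hn0 : (0:ℝ) < n := by exact_mod_cast hn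
      rw [div_le_iff₀ hn0]
      have h1 := hm_lt n
      have h2 : (p + 1/(n:ℝ)) * n = n * p + 1 := by field_simp
      linarith
  have hnm : Tendsto (fun n : ℕ => (n:ℝ) / (⌈(n:ℝ) * p⌉₊ : ℝ)) atTop (𝓝 p⁻¹) := by
    have h1 := hmn.inv₀ (ne_of_gt hp0)
    apply h1.congr'
    filter_upwards with n
    rw [inv_div]
  -- uniform bound for Q near p
  have hpd_lo : p - d ∈ Set.Ioo (0:ℝ) 1 := ⟨by linarith, by linarith⟩
  have hpd_hi : p + d ∈ Set.Ioo (0:ℝ) 1 := ⟨by linarith, by linarith⟩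
  have hppIoo : p ∈ Set.Ioo (0:ℝ) 1 := ⟨hp0, hp1⟩
  set C : ℝ := max |Q (p - d)| (max |Q p| |Q (p + d)|) with hCdef
  have hQbound : ∀ q ∈ Set.Ioo (0:ℝ) 1, p - d ≤ q → q ≤ p + d → |Q q| ≤ C := by
    intro q hq h1 h2
    have hl := hQm _ _ hpd_lo hq h1
    have hu := hQm _ _ hq hpd_hi h2
    rw [abs_le]
    constructor
    · have h3 : -|Q (p-d)| ≤ Q (p-d) := neg_abs_le _
      have h4 : |Q (p-d)| ≤ C := le_max_left _ _
      linarith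
    · have h3 : Q (p+d) ≤ |Q (p+d)| := le_abs_self _
      have h4 : |Q (p+d)| ≤ C := le_trans (le_max_right _ _) (le_max_right _ _)
      linarith
  have ht1b : ∀ k, |Q (p - δ k)| ≤ C := fun k =>
    hQbound _ (hlo k) (by linarith [hδle k]) (by linarith [hδpos k, hd0])
  have ht2b : ∀ k, |Q (p + δ k)| ≤ C := fun k =>
    hQbound _ (hhi k) (by linarith [hδpos k, hd0]) (by linarith [hδle k])
  -- convergence of the truncated integrals
  have hIp_int : IntegrableOn Q (Set.Ioc (0:ℝ) p) volume := hQint p hppIoo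
  have hsplit : ∀ k, (∫ q in Set.Ioc (0:ℝ) p, Q q) =
      (∫ q in Set.Ioc (0:ℝ) (p - δ k), Q q) + ∫ q in Set.Ioc (p - δ k) p, Q q := by
    intro k
    rw [← MeasureTheory.setIntegral_union (Set.Ioc_disjoint_Ioc_of_le le_rfl) measurableSet_Ioc
      (hQint _ (hlo k)) (hIp_int.mono_set (Set.Ioc_subset_Ioc_left (le_of_lt (hlo k).1)))]
    rw [Set.Ioc_union_Ioc_eq_Ioc (le_of_lt (hlo k).1) (by linarith [hδpos k])]
  have hJ : Tendsto (fun k => ∫ q in Set.Ioc (p - δ k) p, Q q) atTop (𝓝 0) := by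
    apply squeeze_zero_norm (a := fun k => C * δ k)
    · intro k
      have hvol : volume (Set.Ioc (p - δ k) p) < ⊤ := by
        rw [Real.volume_Ioc]; exact ENNReal.ofReal_lt_top
      have hb := norm_setIntegral_le_of_norm_le_const (μ := volume) (f := Q) (s := Set.Ioc (p - δ k) p)
        (C := C) hvol ?_
      · rw [measureReal_def, Real.volume_Ioc, ENNReal.toReal_ofReal (by linarith [hδpos k])] at hb
        calc ‖∫ q in Set.Ioc (p - δ k) p, Q q‖ ≤ C * (p - (p - δ k)) := hb
          _ = C * δ k := by ring
      · intro q hq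
        rw [Real.norm_eq_abs]
        obtain ⟨hq1, hq2⟩ := hq
        exact hQbound q ⟨by linarith [hδpos k, hδle k], by linarith⟩
          (by linarith [hδle k]) (by linarith [hd0])
    · simpa using hδ0.const_mul C
  have hI1 : Tendsto (fun k => ∫ q in Set.Ioc (0:ℝ) (p - δ k), Q q) atTop
      (𝓝 (∫ q in Set.Ioc (0:ℝ) p, Q q)) := by
    have heq : (fun k => ∫ q in Set.Ioc (0:ℝ) (p - δ k), Q q)
        = fun k => (∫ q in Set.Ioc (0:ℝ) p, Q q) - ∫ q in Set.Ioc (p - δ k) p, Q q :=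
      funext fun k => by linarith [hsplit k]
    rw [heq]
    simpa using tendsto_const_nhds.sub hJ
  have hcoef : Tendsto (fun k => 1 - (p - δ k) * p⁻¹) atTop (𝓝 0) := by
    have heq : (fun k => 1 - (p - δ k) * p⁻¹) = fun k => δ k * p⁻¹ := by
      funext k; field_simp; ring
    rw [heq]
    simpa using hδ0.mul_const p⁻¹
  have hsecond : ∀ (t : ℕ → ℝ), (∀ k, |t k| ≤ C) →
      Tendsto (fun k => (1 - (p - δ k) * p⁻¹) * t k) atTop (𝓝 0) := by
    intro t ht
    apply squeeze_zero_norm (a := fun k => |1 - (p - δ k) * p⁻¹| * C)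
    · intro k
      rw [norm_mul, Real.norm_eq_abs, Real.norm_eq_abs]
      exact mul_le_mul_of_nonneg_left (ht k) (abs_nonneg _)
    · have h1 := hcoef.abs.mul_const C
      simpa using h1
  have hLlim : Tendsto (fun k => (∫ q in Set.Ioc (0:ℝ) (p - δ k), Q q) * p⁻¹
      + (1 - (p - δ k) * p⁻¹) * Q (p - δ k)) atTop
      (𝓝 ((∫ q in Set.Ioc (0:ℝ) p, Q q) * p⁻¹)) := by
    simpa using (hI1.mul_const p⁻¹).add (hsecond _ ht1b)
  have hUlim : Tendsto (fun k => (∫ q in Set.Ioc (0:ℝ) (p - δ k), Q q) * p⁻¹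
      + (1 - (p - δ k) * p⁻¹) * Q (p + δ k)) atTop
      (𝓝 ((∫ q in Set.Ioc (0:ℝ) p, Q q) * p⁻¹)) := by
    simpa using (hI1.mul_const p⁻¹).add (hsecond _ ht2b)
  -- reduce to a.e. convergence
  apply tendstoInMeasure_of_tendsto_ae
  · intro n
    apply Measurable.aestronglyMeasurable
    apply Measurable.const_mul
    apply Finset.measurable_sum
    intro i hi
    rw [Finset.mem_Icc] at hi
    exact orderStat_measurable W hmeas n i hi.1 (le_trans hi.2 (hm_le_n n))
  · filter_upwards [haeA, haeB, haeC] with ω hA hB hC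
    have htarget : (1 / p) * (∫ q in (0:ℝ)..p, Q q) = (∫ q in Set.Ioc (0:ℝ) p, Q q) * p⁻¹ := by
      rw [intervalIntegral.integral_of_le hp0.le, one_div]
      ring
    rw [Metric.tendsto_atTop]
    intro ε hε
    obtain ⟨kL, hkL⟩ := Metric.tendsto_atTop.1 hLlim (ε/4) (by linarith)
    obtain ⟨kU, hkU⟩ := Metric.tendsto_atTop.1 hUlim (ε/4) (by linarith)
    set k := max kL kU with hkdef
    have hLk := hkL k (le_max_left _ _)
    have hUk := hkU k (le_max_right _ _)
    -- convergence of lower/upper bound quantities in n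
    have hAn : Tendsto (fun n : ℕ =>
        ((n:ℝ)⁻¹ * ∑ i ∈ Finset.range n, (if W i ω ≤ Q (p - δ k) then W i ω else 0))
          * ((n:ℝ)/(⌈(n:ℝ)*p⌉₊:ℝ))
        + (1 - ((n:ℝ)⁻¹ * ∑ i ∈ Finset.range n, (if W i ω ≤ Q (p - δ k) then (1:ℝ) else 0))
          * ((n:ℝ)/(⌈(n:ℝ)*p⌉₊:ℝ))) * Q (p - δ k)) atTop
        (𝓝 ((∫ q in Set.Ioc (0:ℝ) (p - δ k), Q q) * p⁻¹
          + (1 - (p - δ k) * p⁻¹) * Q (p - δ k))) :=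
      (((hA k).mul hnm)).add ((tendsto_const_nhds.sub ((hB k).mul hnm)).mul tendsto_const_nhds)
    have hBn : Tendsto (fun n : ℕ =>
        ((n:ℝ)⁻¹ * ∑ i ∈ Finset.range n, (if W i ω ≤ Q (p - δ k) then W i ω else 0))
          * ((n:ℝ)/(⌈(n:ℝ)*p⌉₊:ℝ))
        + (1 - ((n:ℝ)⁻¹ * ∑ i ∈ Finset.range n, (if W i ω ≤ Q (p - δ k) then (1:ℝ) else 0))
          * ((n:ℝ)/(⌈(n:ℝ)*p⌉₊:ℝ))) * Q (p + δ k)) atTop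
        (𝓝 ((∫ q in Set.Ioc (0:ℝ) (p - δ k), Q q) * p⁻¹
          + (1 - (p - δ k) * p⁻¹) * Q (p + δ k))) :=
      (((hA k).mul hnm)).add ((tendsto_const_nhds.sub ((hB k).mul hnm)).mul tendsto_const_nhds)
    have e2 := (hB k).eventually_lt_const (show p - δ k < p - δ k / 2 by linarith [hδpos k])
    have e3 := (hC k).eventually_const_lt (show p + δ k / 2 < p + δ k by linarith [hδpos k])
    have e4 : ∀ᶠ n : ℕ in atTop, (2/δ k) ≤ (n:ℝ) :=
      tendsto_natCast_atTop_atTop.eventually_ge_atTop _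
    have e5 : ∀ᶠ n : ℕ in atTop, dist (((n:ℝ)⁻¹ * ∑ i ∈ Finset.range n,
        (if W i ω ≤ Q (p - δ k) then W i ω else 0)) * ((n:ℝ)/(⌈(n:ℝ)*p⌉₊:ℝ))
        + (1 - ((n:ℝ)⁻¹ * ∑ i ∈ Finset.range n, (if W i ω ≤ Q (p - δ k) then (1:ℝ) else 0))
          * ((n:ℝ)/(⌈(n:ℝ)*p⌉₊:ℝ))) * Q (p - δ k))
        ((∫ q in Set.Ioc (0:ℝ) (p - δ k), Q q) * p⁻¹
          + (1 - (p - δ k) * p⁻¹) * Q (p - δ k)) < ε/4 := by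
      obtain ⟨N, hN⟩ := Metric.tendsto_atTop.1 hAn (ε/4) (by linarith)
      exact eventually_atTop.2 ⟨N, hN⟩
    have e6 : ∀ᶠ n : ℕ in atTop, dist (((n:ℝ)⁻¹ * ∑ i ∈ Finset.range n,
        (if W i ω ≤ Q (p - δ k) then W i ω else 0)) * ((n:ℝ)/(⌈(n:ℝ)*p⌉₊:ℝ))
        + (1 - ((n:ℝ)⁻¹ * ∑ i ∈ Finset.range n, (if W i ω ≤ Q (p - δ k) then (1:ℝ) else 0))
          * ((n:ℝ)/(⌈(n:ℝ)*p⌉₊:ℝ))) * Q (p + δ k))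
        ((∫ q in Set.Ioc (0:ℝ) (p - δ k), Q q) * p⁻¹
          + (1 - (p - δ k) * p⁻¹) * Q (p + δ k)) < ε/4 := by
      obtain ⟨N, hN⟩ := Metric.tendsto_atTop.1 hBn (ε/4) (by linarith)
      exact eventually_atTop.2 ⟨N, hN⟩
    have hcomb : ∀ᶠ n : ℕ in atTop, dist ((1 / (⌈(n : ℝ) * p⌉₊ : ℝ)) *
        ∑ i ∈ Finset.Icc 1 ⌈(n : ℝ) * p⌉₊, orderStat W n i ω)
        ((1 / p) * (∫ q in (0 : ℝ)..p, Q q)) < ε := by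
      filter_upwards [eventually_ge_atTop 1, e2, e3, e4, e5, e6] with n h1 h2 h3 h4 h5 h6
      have hn0 : (0:ℝ) < n := by exact_mod_cast h1
      have hmpos := hm_pos n h1
      have hm0 : (0:ℝ) < (⌈(n:ℝ)*p⌉₊ : ℝ) := by exact_mod_cast hmpos
      have hmsle : ⌈(n:ℝ)*p⌉₊ ≤ (List.insertionSort (· ≤ ·)
          (List.ofFn (fun j : Fin n => W j ω))).length := by
        rw [(List.perm_insertionSort _ _).length_eq, List.length_ofFn]
        exact hm_le_n n
      set t1 := Q (p - δ k) with ht1def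
      set t2 := Q (p + δ k) with ht2def
      set l : List ℝ := List.ofFn (fun j : Fin n => W j ω) with hldef
      set s : List ℝ := List.insertionSort (· ≤ ·) l with hsdef
      have hperm : s.Perm l := List.perm_insertionSort _ _
      have hsort : s.Pairwise (· ≤ ·) := List.pairwise_insertionSort _ _
      have hslen : s.length = n := by rw [hperm.length_eq, hldef, List.length_ofFn]
      have hc1 : ((s.countP (fun y => decide (y ≤ t1)) : ℕ) : ℝ)
          = ∑ i ∈ Finset.range n, (if W i ω ≤ t1 then (1:ℝ) else 0) := by
        rw [hperm.countP_eq, hldef, list_countP_eq_sum_map,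
          ofFn_map_sum (fun j => W j ω) (fun y => if decide (y ≤ t1) then (1:ℝ) else 0)]
        simp only [decide_eq_true_eq]
      have hc2 : ((s.countP (fun y => decide (y ≤ t2)) : ℕ) : ℝ)
          = ∑ i ∈ Finset.range n, (if W i ω ≤ t2 then (1:ℝ) else 0) := by
        rw [hperm.countP_eq, hldef, list_countP_eq_sum_map,
          ofFn_map_sum (fun j => W j ω) (fun y => if decide (y ≤ t2) then (1:ℝ) else 0)]
        simp only [decide_eq_true_eq]
      have hTs : (s.filter (fun y => decide (y ≤ t1))).sum
          = ∑ i ∈ Finset.range n, (if W i ω ≤ t1 then W i ω else 0) := by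
        rw [(hperm.filter _).sum_eq, hldef, list_sum_filter_eq_sum_map,
          ofFn_map_sum (fun j => W j ω) (fun y => if decide (y ≤ t1) then y else 0)]
        simp only [decide_eq_true_eq]
      -- the ℕ count inequalities
      have hc1m : s.countP (fun y => decide (y ≤ t1)) ≤ ⌈(n:ℝ)*p⌉₊ := by
        have hreal : ((s.countP (fun y => decide (y ≤ t1)) : ℕ) : ℝ) < (⌈(n:ℝ)*p⌉₊:ℝ) := by
          rw [hc1]
          have hx : ∑ i ∈ Finset.range n, (if W i ω ≤ t1 then (1:ℝ) else 0)
              = (n:ℝ) * ((n:ℝ)⁻¹ * ∑ i ∈ Finset.range n, (if W i ω ≤ t1 then (1:ℝ) else 0)) := by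
            field_simp
          rw [hx]
          have h2' := mul_lt_mul_of_pos_left h2 hn0
          have h2'' : (n:ℝ) * (p - δ k / 2) < (n:ℝ) * p := by nlinarith [hδpos k]
          linarith [hm_ge n]
        have : s.countP (fun y => decide (y ≤ t1)) < ⌈(n:ℝ)*p⌉₊ := by exact_mod_cast hreal
        omega
      have hmc2 : ⌈(n:ℝ)*p⌉₊ ≤ s.countP (fun y => decide (y ≤ t2)) := by
        have hreal : (⌈(n:ℝ)*p⌉₊:ℝ) < ((s.countP (fun y => decide (y ≤ t2)) : ℕ):ℝ) := by
          rw [hc2]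
          have hx : ∑ i ∈ Finset.range n, (if W i ω ≤ t2 then (1:ℝ) else 0)
              = (n:ℝ) * ((n:ℝ)⁻¹ * ∑ i ∈ Finset.range n, (if W i ω ≤ t2 then (1:ℝ) else 0)) := by
            field_simp
          rw [hx]
          have h3' := mul_lt_mul_of_pos_left h3 hn0
          have hδk2 : 1 ≤ (n:ℝ) * (δ k / 2) := by
            have h42 := mul_le_mul_of_nonneg_right h4 (le_of_lt (half_pos (hδpos k)))
            have hsimp : (2/δ k) * (δ k/2) = 1 := by
              field_simp [(hδpos k).ne']
            linarith
          have hexp : (n:ℝ)*(p + δ k/2) = (n:ℝ)*p + (n:ℝ)*(δ k/2) := by ring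
          linarith [hm_lt n]
        have : ⌈(n:ℝ)*p⌉₊ < s.countP (fun y => decide (y ≤ t2)) := by exact_mod_cast hreal
        omega
      obtain ⟨hlow, hhigh⟩ := take_sum_sandwich hsort (by rw [hslen]; exact hm_le_n n) t1 t2 hc1m hmc2
      have hfo : ∑ i ∈ Finset.Icc 1 ⌈(n:ℝ)*p⌉₊, orderStat W n i ω = (s.take ⌈(n:ℝ)*p⌉₊).sum := by
        have hcongr : ∀ i ∈ Finset.Icc 1 ⌈(n:ℝ)*p⌉₊, orderStat W n i ω = s.getD (i-1) 0 :=
          fun i _ => rfl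
        rw [Finset.sum_congr rfl hcongr, Icc_sum_eq_range_sum (fun i => s.getD i 0)]
        exact (take_sum_eq_range_sum s (by rw [hslen]; exact hm_le_n n)).symm
      rw [hc1, hTs] at hlow hhigh
      set Ts := ∑ i ∈ Finset.range n, (if W i ω ≤ t1 then W i ω else 0) with hTsdef
      set Ns := ∑ i ∈ Finset.range n, (if W i ω ≤ t1 then (1:ℝ) else 0) with hNsdef
      set M : ℝ := (⌈(n:ℝ)*p⌉₊ : ℝ) with hMdef
      have hMne : M ≠ 0 := ne_of_gt hm0
      have hnne : (n:ℝ) ≠ 0 := ne_of_gt hn0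
      have hAval : ((n:ℝ)⁻¹ * Ts) * ((n:ℝ)/M) + (1 - ((n:ℝ)⁻¹ * Ns) * ((n:ℝ)/M)) * t1
          = (Ts + (M - Ns) * t1)/M := by
        field_simp
      have hBval : ((n:ℝ)⁻¹ * Ts) * ((n:ℝ)/M) + (1 - ((n:ℝ)⁻¹ * Ns) * ((n:ℝ)/M)) * t2
          = (Ts + (M - Ns) * t2)/M := by
        field_simp
      rw [hAval] at h5
      rw [hBval] at h6
      have hvlb : (Ts + (M - Ns) * t1)/M ≤ (1/M)*(s.take ⌈(n:ℝ)*p⌉₊).sum := by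
        rw [one_div, inv_mul_eq_div]
        exact (div_le_div_iff_of_pos_right hm0).2 hlow
      have hvub : (1/M)*(s.take ⌈(n:ℝ)*p⌉₊).sum ≤ (Ts + (M - Ns) * t2)/M := by
        rw [one_div, inv_mul_eq_div]
        exact (div_le_div_iff_of_pos_right hm0).2 hhigh
      rw [htarget, hfo, Real.dist_eq]
      rw [Real.dist_eq] at h5 h6 hLk hUk
      obtain ⟨h5a, h5b⟩ := abs_sub_lt_iff.1 h5
      obtain ⟨h6a, h6b⟩ := abs_sub_lt_iff.1 h6
      obtain ⟨hLa, hLb⟩ := abs_sub_lt_iff.1 hLk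
      obtain ⟨hUa, hUb⟩ := abs_sub_lt_iff.1 hUk
      rw [abs_sub_lt_iff]
      constructor
      · linarith
      · linarith
    obtain ⟨N, hN⟩ := eventually_atTop.1 hcomb
    exact ⟨N, hN⟩
end

section
/- Let 0 < p < 1 and set r_n = (1/n)∑_{i=1}^n 𝟙{W_i ≤ F^{-1}(p)}. Then the boundary block of order statistics between the random index ⌈n r_n⌉ and the deterministic index ⌈np⌉ is negligible at the law-of-large-numbers scale: (1/⌈np⌉) | ∑_{i=⌈n r_n⌉+1}^{⌈np⌉} W_{(i)} | →^P 0 as n → ∞ (with the convention that when ⌈n r_n⌉ + 1 > ⌈np⌉ the limits of summation are interchanged and the sum carries a negative sign). -/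
open MeasureTheory ProbabilityTheory Filter Set
open scoped Topology

/-- The sum `∑_{i=a+1}^{b} h i`, with the convention that when `a + 1 > b` the limits of
summation are interchanged and the sum carries a negative sign. -/
noncomputable def signedBlockSum (h : ℕ → ℝ) (a b : ℕ) : ℝ :=
  if a ≤ b then ∑ i ∈ Finset.Icc (a + 1) b, h i else -∑ i ∈ Finset.Icc (b + 1) a, h i

lemma sorted_getD_le_iff : ∀ (l : List ℝ), l.Pairwise (· ≤ ·) → ∀ (i : ℕ), i < l.length → ∀ (x : ℝ),
    (l.getD i 0 ≤ x ↔ i < l.countP (fun y => decide (y ≤ x))) := by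
  intro l
  induction l with
  | nil => simp
  | cons a tl ih =>
    intro hl i hi x
    rw [List.pairwise_cons] at hl
    obtain ⟨ha, hs⟩ := hl
    have hcount : ¬ a ≤ x → tl.countP (fun y => decide (y ≤ x)) = 0 := by
      intro h
      rw [List.countP_eq_zero]
      intro y hy
      simp only [decide_eq_true_eq]
      intro hyx; exact h (le_trans (ha y hy) hyx)
    cases i with
    | zero =>
      simp only [List.getD_cons_zero, List.countP_cons]
      by_cases hax : a ≤ x
      · simp [hax]
      · simp [hax, hcount hax]
    | succ j =>
      simp only [List.getD_cons_succ, List.countP_cons]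
      have hj : j < tl.length := by simpa using hi
      rw [ih hs j hj x]
      by_cases hax : a ≤ x
      · simp [hax]
      · simp [hax, hcount hax]

noncomputable def cntAux {Ω : Type*} (W : ℕ → Ω → ℝ) (x : ℝ) (n : ℕ) (ω : Ω) : ℕ :=
  ∑ i ∈ Finset.range n, if W i ω ≤ x then 1 else 0

lemma countP_ofFn_eq {Ω : Type*} (x : ℝ) :
    ∀ (n : ℕ) (W : ℕ → Ω → ℝ) (ω : Ω),
      (List.ofFn fun j : Fin n => W j ω).countP (fun y => decide (y ≤ x)) = cntAux W x n ω := by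
  intro n
  induction n with
  | zero => simp [cntAux]
  | succ m ih =>
    intro W ω
    rw [List.ofFn_succ, List.countP_cons]
    have := ih (fun j => W (j + 1)) ω
    simp only [Fin.val_succ] at *
    rw [show (List.ofFn fun i : Fin m => W (i + 1) ω)
        = (List.ofFn fun i : Fin m => (fun j => W (j+1)) i ω) from rfl, this]
    simp only [cntAux, Finset.sum_range_succ']
    by_cases h : W 0 ω ≤ x <;> simp [h]

lemma orderStat_le_iff {Ω : Type*} (W : ℕ → Ω → ℝ) (n i : ℕ) (hi1 : 1 ≤ i) (hin : i ≤ n)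
    (ω : Ω) (x : ℝ) :
    orderStat W n i ω ≤ x ↔ i - 1 < cntAux W x n ω := by
  unfold orderStat
  rw [sorted_getD_le_iff _ (List.pairwise_insertionSort _ _) _
    (by rw [List.length_insertionSort, List.length_ofFn]; omega) x,
    (List.perm_insertionSort _ _).countP_eq, countP_ofFn_eq x n W ω]

lemma cntAux_le {Ω : Type*} (W : ℕ → Ω → ℝ) (x : ℝ) (n : ℕ) (ω : Ω) : cntAux W x n ω ≤ n := by
  unfold cntAux
  calc ∑ i ∈ Finset.range n, (if W i ω ≤ x then 1 else 0)
      ≤ ∑ i ∈ Finset.range n, 1 := Finset.sum_le_sum (fun i _ => by split <;> omega)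
    _ = n := by simp

lemma cntAux_measurable {Ω : Type*} [MeasurableSpace Ω] (W : ℕ → Ω → ℝ)
    (hmeas : ∀ i, Measurable (W i)) (x : ℝ) (n : ℕ) : Measurable (cntAux W x n) := by
  unfold cntAux
  apply Finset.measurable_sum
  intro i _
  exact Measurable.ite ((hmeas i) measurableSet_Iic) measurable_const measurable_const

lemma signedBlockSum_abs_le (h : ℕ → ℝ) (a b : ℕ) (C : ℝ)
    (hC : ∀ i ∈ Finset.Icc (min a b + 1) (max a b), |h i| ≤ C) :
    |signedBlockSum h a b| ≤ C * |(a : ℝ) - (b : ℝ)| := by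
  have key : ∀ u v : ℕ, u ≤ v → (∀ i ∈ Finset.Icc (u + 1) v, |h i| ≤ C) →
      |∑ i ∈ Finset.Icc (u + 1) v, h i| ≤ C * ((v : ℝ) - u) := by
    intro u v huv hb
    calc |∑ i ∈ Finset.Icc (u + 1) v, h i| ≤ ∑ i ∈ Finset.Icc (u + 1) v, |h i| :=
          Finset.abs_sum_le_sum_abs _ _
      _ ≤ ∑ _i ∈ Finset.Icc (u + 1) v, C := Finset.sum_le_sum hb
      _ = ((v - u : ℕ) : ℝ) * C := by rw [Finset.sum_const, Nat.card_Icc]; push_cast; ring_nf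
      _ = C * ((v : ℝ) - u) := by rw [Nat.cast_sub huv]; ring
  unfold signedBlockSum
  split
  · next hab =>
    have hcab : (a:ℝ) ≤ b := Nat.cast_le.mpr hab
    have := key a b hab (by simpa [min_eq_left hab, max_eq_right hab] using hC)
    rwa [abs_sub_comm, abs_of_nonneg (sub_nonneg.mpr hcab)]
  · next hab =>
    push_neg at hab
    have hba := le_of_lt hab
    have hcba : (b:ℝ) ≤ a := Nat.cast_le.mpr hba
    have := key b a hba (by simpa [min_eq_right hba, max_eq_left hba] using hC)
    rwa [abs_neg, abs_of_nonneg (sub_nonneg.mpr hcba)]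

lemma cnt_slln {Ω : Type*} [MeasurableSpace Ω] (P : Measure Ω) [IsProbabilityMeasure P]
    (W : ℕ → Ω → ℝ) (hmeas : ∀ i, Measurable (W i))
    (hindep : iIndepFun W P)
    (hident : ∀ i, IdentDistrib (W i) (W 0) P P) (x : ℝ) :
    ∀ᵐ ω ∂P, Tendsto (fun n : ℕ => (cntAux W x n ω : ℝ) / n) atTop
      (𝓝 ((P (W 0 ⁻¹' Iic x)).toReal)) := by
  set g : ℝ → ℝ := fun t => if t ≤ x then 1 else 0 with hg
  have hgm : Measurable g := Measurable.ite measurableSet_Iic measurable_const measurable_const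
  set X : ℕ → Ω → ℝ := fun i ω => g (W i ω) with hX
  have hX0 : X 0 = (W 0 ⁻¹' Iic x).indicator (fun _ => (1:ℝ)) := by
    funext ω
    by_cases h : W 0 ω ≤ x <;>
      simp [hX, hg, Set.indicator_apply, Set.mem_preimage, Set.mem_Iic, h]
  have hint : Integrable (X 0) P := by
    rw [hX0]
    exact (integrable_const (1:ℝ)).indicator ((hmeas 0) measurableSet_Iic)
  have hpind : Pairwise (Function.onFun (IndepFun · · P) X) := by
    intro i j hij
    exact (hindep.indepFun hij).comp hgm hgm
  have hpid : ∀ i, IdentDistrib (X i) (X 0) P P := fun i => (hident i).comp hgm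
  have hE : P[X 0] = (P (W 0 ⁻¹' Iic x)).toReal := by
    rw [hX0, integral_indicator_const (1:ℝ) ((hmeas 0) measurableSet_Iic)]
    simp [measureReal_def]
  have := strong_law_ae_real X hint hpind hpid
  rw [hE] at this
  filter_upwards [this] with ω hω
  have heq : ∀ n : ℕ, (cntAux W x n ω : ℝ) = ∑ i ∈ Finset.range n, X i ω := by
    intro n
    simp only [cntAux, hX, hg]
    push_cast [apply_ite]
    rfl
  simpa [heq] using hω

set_option maxHeartbeats 1000000 in
/-- **The boundary block is negligible at the LLN scale.**
With `r_n = (1/n)∑_{i=1}^n 𝟙{Wᵢ ≤ F⁻¹(p)}`,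
`(1/⌈np⌉) |∑_{i=⌈n rₙ⌉+1}^{⌈np⌉} W_{(i)}| →ᴾ 0`. -/
theorem boundary_block_lln_negligible
    {Ω : Type*} [MeasurableSpace Ω] (P : Measure Ω) [IsProbabilityMeasure P]
    (W : ℕ → Ω → ℝ) (hmeas : ∀ i, Measurable (W i))
    (hindep : iIndepFun W P)
    (hident : ∀ i, IdentDistrib (W i) (W 0) P P)
    (F f Q : ℝ → ℝ)
    (hcdf : ∀ x, F x = (P (W 0 ⁻¹' Iic x)).toReal)
    (hdensity : P.map (W 0) = volume.withDensity (fun x => ENNReal.ofReal (f x)))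
    (hQ : ∀ p ∈ Ioo (0 : ℝ) 1, F (Q p) = p ∧ ∀ y, F y = p → y = Q p)
    (hL2 : MemLp (W 0) 2 P)
    (p : ℝ) (hp : p ∈ Ioo (0 : ℝ) 1) :
    TendstoInMeasure P
      (fun (n : ℕ) ω =>
        (1 / (⌈(n : ℝ) * p⌉₊ : ℝ)) *
          |signedBlockSum (fun i => orderStat W n i ω)
            ⌈(n : ℝ) * ((1 / (n : ℝ)) *
              ∑ i ∈ Finset.range n, if W i ω ≤ Q p then (1 : ℝ) else 0)⌉₊
            ⌈(n : ℝ) * p⌉₊|)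
      atTop (fun _ => (0 : ℝ)) := by
  obtain ⟨hp0, hp1⟩ := hp
  set ε : ℝ := min p (1 - p) / 4 with hεdef
  have hε : 0 < ε := by
    have h1 : 0 < min p (1 - p) := lt_min hp0 (by linarith)
    positivity
  have hε1 : 4 * ε ≤ p := by
    have := min_le_left p (1 - p); rw [hεdef]; linarith
  have hε2 : 4 * ε ≤ 1 - p := by
    have := min_le_right p (1 - p); rw [hεdef]; linarith
  set plo : ℝ := p - 2 * ε with hplodef
  set phi : ℝ := p + 2 * ε with hphidef
  have hplomem : plo ∈ Ioo (0:ℝ) 1 := ⟨by rw [hplodef]; linarith, by rw [hplodef]; linarith⟩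
  have hphimem : phi ∈ Ioo (0:ℝ) 1 := ⟨by rw [hphidef]; linarith, by rw [hphidef]; linarith⟩
  have hpmem : p ∈ Ioo (0:ℝ) 1 := ⟨hp0, hp1⟩
  set xlo : ℝ := Q plo with hxlodef
  set xhi : ℝ := Q phi with hxhidef
  have hFlo : (P (W 0 ⁻¹' Iic xlo)).toReal = plo := by
    rw [← hcdf xlo]; exact (hQ plo hplomem).1
  have hFhi : (P (W 0 ⁻¹' Iic xhi)).toReal = phi := by
    rw [← hcdf xhi]; exact (hQ phi hphimem).1
  have hFp : (P (W 0 ⁻¹' Iic (Q p))).toReal = p := by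
    rw [← hcdf (Q p)]; exact (hQ p hpmem).1
  set C : ℝ := max |xlo| |xhi| with hCdef
  have hC0 : 0 ≤ C := le_trans (abs_nonneg xlo) (le_max_left _ _)
  set b : ℕ → ℕ := fun n => ⌈(n:ℝ) * p⌉₊ with hbdef
  -- deterministic facts about b
  have hbn : ∀ n : ℕ, b n ≤ n := by
    intro n
    rw [hbdef]
    exact Nat.ceil_le.mpr (by nlinarith [Nat.cast_nonneg (α := ℝ) n])
  have hb1 : ∀ n : ℕ, 1 ≤ n → 1 ≤ b n := by
    intro n hn
    rw [hbdef]
    have : (0:ℝ) < (n:ℝ) * p := by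
      have : (1:ℝ) ≤ n := by exact_mod_cast hn
      nlinarith
    exact Nat.ceil_pos.mpr this
  have hupper : Tendsto (fun n : ℕ => p + 1 / (n:ℝ)) atTop (𝓝 p) := by
    have := Tendsto.add (tendsto_const_nhds (x := p) (f := (atTop : Filter ℕ)))
      tendsto_one_div_atTop_nhds_zero_nat
    simpa using this
  have hbtend : Tendsto (fun n : ℕ => (b n : ℝ) / n) atTop (𝓝 p) := by
    apply tendsto_of_tendsto_of_tendsto_of_le_of_le'
      (tendsto_const_nhds (x := p) (f := atTop)) hupper
    · filter_upwards [eventually_ge_atTop 1] with n hn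
      have hn0 : (0:ℝ) < n := by exact_mod_cast hn
      rw [le_div_iff₀ hn0]
      calc p * n = (n:ℝ) * p := by ring
        _ ≤ b n := Nat.le_ceil _
    · filter_upwards [eventually_ge_atTop 1] with n hn
      have hn0 : (0:ℝ) < n := by exact_mod_cast hn
      rw [div_le_iff₀ hn0]
      have := Nat.ceil_lt_add_one (a := (n:ℝ) * p) (by positivity)
      calc (b n : ℝ) ≤ (n:ℝ) * p + 1 := le_of_lt this
        _ ≤ (p + 1 / n) * n := by field_simp; ring_nf; linarith
  -- strong laws
  have hlo := cnt_slln P W hmeas hindep hident xlo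
  have hmid := cnt_slln P W hmeas hindep hident (Q p)
  have hhi := cnt_slln P W hmeas hindep hident xhi
  rw [hFlo] at hlo
  rw [hFp] at hmid
  rw [hFhi] at hhi
  -- start the convergence-in-measure proof
  rw [tendstoInMeasure_iff_dist]
  intro δ hδ
  set Bad : ℕ → Set Ω := fun n => {ω | ¬ (cntAux W xlo n ω ≤ min (cntAux W (Q p) n ω) (b n) ∧
      max (cntAux W (Q p) n ω) (b n) ≤ cntAux W xhi n ω ∧
      C * |(cntAux W (Q p) n ω : ℝ) - (b n : ℝ)| < δ * (b n : ℝ))} with hBaddef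
  have hBadmeas : ∀ n, MeasurableSet (Bad n) := by
    intro n
    have h1 : MeasurableSet {ω | cntAux W xlo n ω ≤ min (cntAux W (Q p) n ω) (b n)} :=
      measurableSet_le (cntAux_measurable W hmeas xlo n)
        ((cntAux_measurable W hmeas (Q p) n).min measurable_const)
    have h2 : MeasurableSet {ω | max (cntAux W (Q p) n ω) (b n) ≤ cntAux W xhi n ω} :=
      measurableSet_le ((cntAux_measurable W hmeas (Q p) n).max measurable_const)
        (cntAux_measurable W hmeas xhi n)
    have h3 : MeasurableSet {ω | C * |(cntAux W (Q p) n ω : ℝ) - (b n : ℝ)| < δ * (b n : ℝ)} := by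
      have : {ω | C * |(cntAux W (Q p) n ω : ℝ) - (b n : ℝ)| < δ * (b n : ℝ)}
          = (cntAux W (Q p) n) ⁻¹' {k : ℕ | C * |(k : ℝ) - (b n : ℝ)| < δ * (b n : ℝ)} := rfl
      rw [this]
      exact (cntAux_measurable W hmeas (Q p) n) (by trivial)
    have heq : Bad n = (({ω | cntAux W xlo n ω ≤ min (cntAux W (Q p) n ω) (b n)} ∩
        {ω | max (cntAux W (Q p) n ω) (b n) ≤ cntAux W xhi n ω}) ∩
        {ω | C * |(cntAux W (Q p) n ω : ℝ) - (b n : ℝ)| < δ * (b n : ℝ)})ᶜ := by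
      ext ω
      simp only [hBaddef, Set.mem_setOf_eq, Set.mem_compl_iff, Set.mem_inter_iff]
      tauto
    rw [heq]
    exact ((h1.inter h2).inter h3).compl
  -- inclusion of the deviation event in Bad n, for n ≥ 1
  have hincl : ∀ n : ℕ, 1 ≤ n →
      {ω | δ ≤ dist ((1 / (⌈(n : ℝ) * p⌉₊ : ℝ)) *
          |signedBlockSum (fun i => orderStat W n i ω)
            ⌈(n : ℝ) * ((1 / (n : ℝ)) *
              ∑ i ∈ Finset.range n, if W i ω ≤ Q p then (1 : ℝ) else 0)⌉₊
            ⌈(n : ℝ) * p⌉₊|) (0:ℝ)} ⊆ Bad n := by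
    intro n hn ω hω
    simp only [Set.mem_setOf_eq] at hω
    rw [hBaddef]
    simp only [Set.mem_setOf_eq]
    intro ⟨g1, g2, g3⟩
    -- identify the random ceiling index with cntAux
    have hn0 : (n:ℝ) ≠ 0 := by positivity
    have hr : ⌈(n : ℝ) * ((1 / (n : ℝ)) *
        ∑ i ∈ Finset.range n, if W i ω ≤ Q p then (1 : ℝ) else 0)⌉₊
        = cntAux W (Q p) n ω := by
      have hs : ∑ i ∈ Finset.range n, (if W i ω ≤ Q p then (1:ℝ) else 0)
          = ((cntAux W (Q p) n ω : ℕ) : ℝ) := by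
        simp only [cntAux]
        push_cast [apply_ite]
        rfl
      rw [hs]
      rw [show (n : ℝ) * ((1 / (n : ℝ)) * ((cntAux W (Q p) n ω : ℕ) : ℝ))
          = ((cntAux W (Q p) n ω : ℕ) : ℝ) by field_simp]
      exact Nat.ceil_natCast _
    rw [hr] at hω
    set a : ℕ := cntAux W (Q p) n ω with hadef
    -- entrywise bound on the block
    have hentry : ∀ i ∈ Finset.Icc (min a (b n) + 1) (max a (b n)),
        |orderStat W n i ω| ≤ C := by
      intro i hi
      rw [Finset.mem_Icc] at hi
      have hi1 : 1 ≤ i := by omega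
      have hin : i ≤ n := le_trans hi.2 (max_le (by rw [hadef]; exact cntAux_le W (Q p) n ω) (hbn n))
      have hup : orderStat W n i ω ≤ xhi := by
        rw [orderStat_le_iff W n i hi1 hin ω xhi]
        omega
      have hlow : ¬ orderStat W n i ω ≤ xlo := by
        rw [orderStat_le_iff W n i hi1 hin ω xlo]
        omega
      push_neg at hlow
      rw [abs_le]
      constructor
      · have h1 : -C ≤ -|xlo| := by
          simp only [neg_le_neg_iff]
          exact le_max_left _ _
        have h2 : -|xlo| ≤ xlo := neg_abs_le xlo
        linarith
      · exact le_trans hup (le_trans (le_abs_self xhi) (le_max_right _ _))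
    have hblock := signedBlockSum_abs_le (fun i => orderStat W n i ω) a (b n) C hentry
    -- finish: the scaled block is < δ
    have hbpos : (0:ℝ) < b n := by exact_mod_cast hb1 n hn
    have : dist ((1 / ((b n : ℕ) : ℝ)) *
        |signedBlockSum (fun i => orderStat W n i ω) a (b n)|) (0:ℝ) < δ := by
      rw [Real.dist_eq, sub_zero, abs_of_nonneg (by positivity)]
      calc (1 / (b n : ℝ)) * |signedBlockSum (fun i => orderStat W n i ω) a (b n)|
          ≤ (1 / (b n : ℝ)) * (C * |(a : ℝ) - (b n : ℝ)|) := by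
            apply mul_le_mul_of_nonneg_left hblock (by positivity)
        _ < (1 / (b n : ℝ)) * (δ * (b n : ℝ)) := by
            apply mul_lt_mul_of_pos_left g3 (by positivity)
        _ = δ := by field_simp
    rw [hbdef] at this
    exact absurd hω (not_le.mpr this)
  -- measure of Bad n tends to 0
  have hBadtend : Tendsto (fun n => P (Bad n)) atTop (𝓝 0) := by
    have := tendsto_measure_of_ae_tendsto_indicator_of_isFiniteMeasure (μ := P)
      (A := (∅ : Set Ω)) (As := Bad) (L := atTop) MeasurableSet.empty hBadmeas ?_
    · simpa using this
    · -- a.e. eventually not in Bad n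
      filter_upwards [hlo, hmid, hhi] with ω h1 h2 h3
      simp only [Set.mem_empty_iff_false, iff_false]
      have E1 : ∀ᶠ n : ℕ in atTop, (cntAux W xlo n ω : ℝ) / n < p - ε :=
        h1.eventually_lt_const (by rw [hplodef]; linarith)
      have E2a : ∀ᶠ n : ℕ in atTop, p - ε < (cntAux W (Q p) n ω : ℝ) / n :=
        h2.eventually_const_lt (by linarith)
      have E2b : ∀ᶠ n : ℕ in atTop, (cntAux W (Q p) n ω : ℝ) / n < p + ε :=
        h2.eventually_lt_const (by linarith)
      have E3 : ∀ᶠ n : ℕ in atTop, p + ε < (cntAux W xhi n ω : ℝ) / n :=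
        h3.eventually_const_lt (by rw [hphidef]; linarith)
      have E4a : ∀ᶠ n : ℕ in atTop, p - ε < (b n : ℝ) / n :=
        hbtend.eventually_const_lt (by linarith)
      have E4b : ∀ᶠ n : ℕ in atTop, (b n : ℝ) / n < p + ε :=
        hbtend.eventually_lt_const (by linarith)
      have E5 : ∀ᶠ n : ℕ in atTop,
          (C + 1) * |(cntAux W (Q p) n ω : ℝ) / n - (b n : ℝ) / n| < δ * (p / 2) := by
        have htend : Tendsto (fun n : ℕ => (C + 1) * |(cntAux W (Q p) n ω : ℝ) / n - (b n : ℝ) / n|)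
            atTop (𝓝 ((C + 1) * |p - p|)) := ((h2.sub hbtend).abs.const_mul (C + 1))
        have : (C + 1) * |p - p| = 0 := by simp
        rw [this] at htend
        exact htend.eventually_lt_const (by positivity)
      have E6 : ∀ᶠ n : ℕ in atTop, p / 2 < (b n : ℝ) / n :=
        hbtend.eventually_const_lt (by linarith)
      filter_upwards [E1, E2a, E2b, E3, E4a, E4b, E5, E6, eventually_ge_atTop 1]
        with n e1 e2a e2b e3 e4a e4b e5 e6 hn
      rw [hBaddef]
      simp only [Set.mem_setOf_eq, not_not]
      have hn0 : (0:ℝ) < n := by exact_mod_cast hn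
      have hlt : ∀ u v : ℕ, (u : ℝ) / n < (v : ℝ) / n → u ≤ v := by
        intro u v huv
        have := (div_lt_div_iff_of_pos_right hn0).mp huv
        exact_mod_cast le_of_lt this
      refine ⟨le_min (hlt _ _ (lt_trans e1 e2a)) (hlt _ _ (lt_trans e1 e4a)),
        max_le (hlt _ _ (lt_trans e2b e3)) (hlt _ _ (lt_trans e4b e3)), ?_⟩
      -- the quantitative bound
      set A : ℝ := |(cntAux W (Q p) n ω : ℝ) - (b n : ℝ)| with hAdef
      have hA0 : 0 ≤ A := abs_nonneg _
      have hAn : |(cntAux W (Q p) n ω : ℝ) / n - (b n : ℝ) / n| = A / n := by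
        rw [hAdef, div_sub_div_same, abs_div, abs_of_pos hn0]
      rw [hAn] at e5
      have h5' : (C + 1) * A < δ * (p / 2) * n := by
        have h := (div_lt_iff₀ hn0).mp (by rw [mul_div_assoc]; exact e5)
        linarith
      have h6' : p / 2 * n < (b n : ℝ) := (lt_div_iff₀ hn0).mp e6
      have hCA : C * A ≤ (C + 1) * A := by nlinarith
      have hfin : δ * (p / 2) * n < δ * (b n : ℝ) := by
        calc δ * (p / 2) * n = δ * (p / 2 * n) := by ring
          _ < δ * (b n : ℝ) := mul_lt_mul_of_pos_left h6' hδ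
      linarith
  -- assemble
  apply tendsto_of_tendsto_of_tendsto_of_le_of_le'
    (tendsto_const_nhds (x := (0 : ENNReal)) (f := (atTop : Filter ℕ))) hBadtend
  · exact Eventually.of_forall (fun n => zero_le)
  · filter_upwards [eventually_ge_atTop 1] with n hn
    exact measure_mono (hincl n hn)
end
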